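/- Let n ≥ 3, let W be the Coxeter group of type H_{n-1}, and let w ∈ W_c be fully commutative. Then no reduced expression for w contains three consecutive internal occurrences of letters. -/

import Mathlib

open CoxeterSystem List LaurentPolynomial

noncomputable section

/-! ### Coxeter systems of types `H` and `B` -/

/-- Symmetric bond function: index `i` corresponds to the generator `s_{i+1}`; the bond
between indices `0`,`1` (i.e. `s₁`,`s₂`) equals `c`, consecutive indices otherwise have
bond `3`, and all other pairs commute. -/
def genM (c i j : ℕ) : ℕ :=
  if i = j then 1
  else if i + 1 = j ∨ j + 1 = i then (if i = 0 ∨ j = 0 then c else 3)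
  else 2

lemma genM_symm (c i j : ℕ) : genM c i j = genM c j i := by
  unfold genM; split_ifs <;> omega

lemma genM_diag (c i : ℕ) : genM c i i = 1 := by unfold genM; simp

lemma genM_ne_one (c i j : ℕ) (hc : 3 ≤ c) (h : i ≠ j) : genM c i j ≠ 1 := by
  unfold genM; split_ifs <;> omega

/-- The Coxeter matrix on `k` generators, with first bond `c` (type `H` for `c = 5`,
type `B` for `c = 4`). -/
def Cmat (c k : ℕ) (hc : 3 ≤ c) : CoxeterMatrix (Fin k) where
  M := Matrix.of fun i j => genM c i j
  isSymm := by ext i j; exact genM_symm c j i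
  diagonal := fun i => genM_diag c i
  off_diagonal := fun i j h => genM_ne_one c i j hc (fun hh => h (Fin.ext hh))

/-- The Coxeter matrix of type `H_k`. -/
abbrev Hmat (k : ℕ) : CoxeterMatrix (Fin k) := Cmat 5 k (by norm_num)

/-- The Coxeter matrix of type `B_k`. -/
abbrev Bmat (k : ℕ) : CoxeterMatrix (Fin k) := Cmat 4 k (by norm_num)

/-- `w` is fully commutative: it has no reduced factorization `w = x₁ ⬝ w_{st} ⬝ x₂`,
where `w_{st}` is the longest element of a rank-2 parabolic subgroup `⟨s,t⟩` with
`m(s,t) ≥ 3`. -/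
def FC {B : Type*} {W : Type*} [Group W] {M : CoxeterMatrix B} (cs : CoxeterSystem M W)
    (w : W) : Prop :=
  ¬ ∃ (x₁ x₂ : W) (i j : B), 3 ≤ M i j ∧
      w = x₁ * cs.wordProd (alternatingWord i j (M i j)) * x₂ ∧
      cs.length w = cs.length x₁ + cs.length (cs.wordProd (alternatingWord i j (M i j)))
        + cs.length x₂

/-- Bruhat–Chevalley order: some reduced expression for `w` contains a subword which is a
reduced expression for `x`. -/
def BruhatLE {B : Type*} {W : Type*} [Group W] {M : CoxeterMatrix B}
    (cs : CoxeterSystem M W) (x w : W) : Prop :=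
  ∃ ω ω' : List B, cs.IsReduced ω ∧ cs.wordProd ω = w ∧
    ω'.Sublist ω ∧ cs.IsReduced ω' ∧ cs.wordProd ω' = x

/-! ### Commutations acting on occurrences of letters -/

variable {B : Type*}

/-- One commutation move: swap the letters in positions `k` and `k+1`, which must commute. -/
def SwapStep (M : CoxeterMatrix B) (ω ω' : List B) (k : ℕ) : Prop :=
  ∃ a b : B, ω[k]? = some a ∧ ω[k+1]? = some b ∧ M a b = 2 ∧
    ω' = (ω.set k b).set (k+1) a

/-- Effect of the swap at position `k` on a tracked position. -/
def swapAt (k p : ℕ) : ℕ := if p = k then k + 1 else if p = k + 1 then k else p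

/-- A sequence of commutation moves, together with the induced map on positions
(tracking occurrences of letters). -/
inductive CommPath (M : CoxeterMatrix B) : List B → List B → (ℕ → ℕ) → Prop
  | refl (ω : List B) : CommPath M ω ω id
  | step {ω ω' ω'' : List B} {f : ℕ → ℕ} {k : ℕ} :
      CommPath M ω ω' f → SwapStep M ω' ω'' k → CommPath M ω ω'' (swapAt k ∘ f)

/-- The occurrence at position `p` of `ω` is internal: after commutations it is the middle
term of a consecutive subsequence `s_q s_p s_q` with `m(s_p, s_q) ≥ 3`. -/
def Internal (M : CoxeterMatrix B) (ω : List B) (p : ℕ) : Prop :=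
  ∃ (ω' : List B) (f : ℕ → ℕ) (a q : B), CommPath M ω ω' f ∧ 1 ≤ f p ∧
    ω'[f p]? = some a ∧ ω'[f p - 1]? = some q ∧ ω'[f p + 1]? = some q ∧ 3 ≤ M a q

/-- The occurrence at position `p` of `ω` is lateral with respect to the internal
occurrence at position `r`. -/
def LateralWrt (M : CoxeterMatrix B) (ω : List B) (p r : ℕ) : Prop :=
  ¬ Internal M ω p ∧ Internal M ω r ∧
    ∃ (ω' : List B) (f : ℕ → ℕ) (a q : B), CommPath M ω ω' f ∧
      (f p + 1 = f r ∨ f p = f r + 1) ∧ 1 ≤ f r ∧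
      ω'[f r]? = some q ∧ ω'[f r - 1]? = some a ∧ ω'[f r + 1]? = some a ∧
      ω'[f p]? = some a ∧ 3 ≤ M a q

/-- Lateral occurrence. -/
def Lateral (M : CoxeterMatrix B) (ω : List B) (p : ℕ) : Prop := ∃ r, LateralWrt M ω p r

/-- Bilateral occurrence: lateral with respect to two different internal occurrences. -/
def Bilateral (M : CoxeterMatrix B) (ω : List B) (p : ℕ) : Prop :=
  ∃ r₁ r₂, r₁ ≠ r₂ ∧ LateralWrt M ω p r₁ ∧ LateralWrt M ω p r₂

/-- The occurrence at position `p` is internal and lies in the set `R`: after commutations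
it occurs in a subsequence `t s t` whose rightmost occurrence of `t` is bilateral. -/
def InRSet (M : CoxeterMatrix B) (ω : List B) (p : ℕ) : Prop :=
  Internal M ω p ∧
    ∃ (ω' : List B) (f : ℕ → ℕ) (r : ℕ) (a q : B), CommPath M ω ω' f ∧
      f r = f p + 1 ∧ 1 ≤ f p ∧
      ω'[f p]? = some q ∧ ω'[f p - 1]? = some a ∧ ω'[f p + 1]? = some a ∧ 3 ≤ M q a ∧
      Bilateral M ω r

/-- A word is right justified if every occurrence in `R` has the letter immediately to its
left lateral or internal, and every internal occurrence not in `R` has the letters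
immediately to its left and right lateral or internal. -/
def RightJustified (M : CoxeterMatrix B) (ω : List B) : Prop :=
  ∀ p : ℕ,
    (InRSet M ω p → 1 ≤ p ∧ (Lateral M ω (p-1) ∨ Internal M ω (p-1))) ∧
    (Internal M ω p → ¬ InRSet M ω p →
      1 ≤ p ∧ p + 1 < ω.length ∧ (Lateral M ω (p-1) ∨ Internal M ω (p-1)) ∧
      (Lateral M ω (p+1) ∨ Internal M ω (p+1)))

/-- A bad occurrence of `s₂` (Remark 3.1.11): a lateral occurrence which after commutations
appears as the overscored letter in `s₃ s₁ s₂ s₁ s̄₂ s₃` or `s₃ s̄₂ s₁ s₂ s₁ s₃`. -/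
def BadOcc (M : CoxeterMatrix B) (s1 s2 : B) (ω : List B) (p : ℕ) : Prop :=
  Lateral M ω p ∧
    ∃ (ω' : List B) (f : ℕ → ℕ) (s3 : B) (u v : List B), CommPath M ω ω' f ∧ M s2 s3 = 3 ∧
      ((ω' = u ++ [s3, s1, s2, s1, s2, s3] ++ v ∧ f p = u.length + 4) ∨
       (ω' = u ++ [s3, s2, s1, s2, s1, s3] ++ v ∧ f p = u.length + 1))

/-! ### Blocks for the canonical decomposition of Lemma 3.2.5 -/

/-- Blocks: a plain generator, or one of the six forms of maximal contiguous subsequences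
of internal and lateral letters. -/
inductive Blk (B : Type*) where
  | gen (i : B)
  | f1 | f2 | f3 | f4 | f5 | f6

namespace Blk

/-- The underlying word of a block (`s1`, `s2` are the first two Coxeter generators). -/
def word (s1 s2 : B) : Blk B → List B
  | .gen i => [i]
  | .f1 => [s1, s2]
  | .f2 => [s1, s2, s1]
  | .f3 => [s2, s1, s2]
  | .f4 => [s1, s2, s1, s2]
  | .f5 => [s2, s1, s2]
  | .f6 => [s2, s1, s2, s1]

/-- The positions within each block that are internal. -/
def internalPos : Blk B → List ℕ
  | .gen _ => []
  | .f1 => [1]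
  | .f2 => [1]
  | .f3 => [1]
  | .f4 => [1, 2]
  | .f5 => [1, 2]
  | .f6 => [1, 2]

def isGen : Blk B → Prop
  | .gen _ => True
  | _ => False

/-- Blocks allowed in type `B`: only the forms (1), (2), (3). -/
def isBForm : Blk B → Prop
  | .gen _ => True
  | .f1 => True
  | .f2 => True
  | .f3 => True
  | _ => False

/-- The element of the Temperley–Lieb algebra associated to a block (Definition 3.2.6). -/
def elt {R : Type*} [Ring R] (b1 b2 : R) (g : B → R) : Blk B → R
  | .gen i => g i
  | .f1 => b1 * b2 - 1
  | .f2 => b1 * b2 * b1 - b1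
  | .f3 => b2 * b1 * b2 - b2
  | .f4 => b1 * b2 * b1 * b2 - 2 * (b1 * b2)
  | .f5 => b2 * b1 * b2 - 2 * b2
  | .f6 => b2 * b1 * b2 * b1 - 2 * (b2 * b1)

end Blk

/-- The word spelled by a list of blocks. -/
def blocksWord (s1 s2 : B) (bl : List (Blk B)) : List B :=
  (bl.map (Blk.word s1 s2)).flatten

/-- `bl` is a decomposition of `w ∈ W_c` as in Lemma 3.2.5: the word spelled by the blocks
is a reduced expression for `w` (right justified when `rj = true`), all blocks satisfy `ok`,
the form blocks are maximal (no two adjacent), the occurrences in generator blocks are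
neither internal nor lateral, and within the form blocks the internal occurrences are
exactly the designated ones and all others are lateral. -/
def IsDecomp {W : Type*} [Group W] {M : CoxeterMatrix B} (cs : CoxeterSystem M W)
    (s1 s2 : B) (rj : Bool) (ok : Blk B → Prop) (w : W) (bl : List (Blk B)) : Prop :=
  cs.IsReduced (blocksWord s1 s2 bl) ∧ cs.wordProd (blocksWord s1 s2 bl) = w ∧
  (rj = true → RightJustified M (blocksWord s1 s2 bl)) ∧
  (∀ b ∈ bl, ok b) ∧
  (∀ (j : ℕ) (b b' : Blk B), bl[j]? = some b → bl[j+1]? = some b' → b.isGen ∨ b'.isGen) ∧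
  (∀ (j : ℕ) (b : Blk B) (t : ℕ), bl[j]? = some b → t < (Blk.word s1 s2 b).length →
    (Internal M (blocksWord s1 s2 bl) ((blocksWord s1 s2 (bl.take j)).length + t)
        ↔ t ∈ b.internalPos) ∧
    (Lateral M (blocksWord s1 s2 bl) ((blocksWord s1 s2 (bl.take j)).length + t)
        ↔ (¬ b.isGen ∧ t ∉ b.internalPos)))

/-! ### The generalized Temperley–Lieb algebras -/

/-- The ground ring `A = ℤ[v,v⁻¹]`. -/
abbrev LA : Type := LaurentPolynomial ℤ

/-- `v`. -/
def vv : LA := T 1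

/-- `v⁻¹`. -/
def vinv : LA := T (-1)

/-- `δ = v + v⁻¹`. -/
def δδ : LA := vv + vinv

/-- A Laurent polynomial lies in `ℕ[v, v⁻¹]`, i.e. has non-negative coefficients. -/
def IsNonnegLP (p : LA) : Prop := ∀ z : ℤ, 0 ≤ AddMonoidAlgebra.coeff p z

/-- Defining relations for the generalized Temperley–Lieb algebra; `c = 5` gives type `H`
and `c = 4` gives type `B`.  Generator index `i` corresponds to `b_{i+1}`. -/
inductive TLrel (c k : ℕ) : FreeAlgebra LA (Fin k) → FreeAlgebra LA (Fin k) → Prop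
  | sq (i : Fin k) : TLrel c k (.ι LA i * .ι LA i) (δδ • .ι LA i)
  | comm (i j : Fin k) (h : (i:ℕ) + 1 < j ∨ (j:ℕ) + 1 < i) :
      TLrel c k (.ι LA i * .ι LA j) (.ι LA j * .ι LA i)
  | braid (i j : Fin k) (h : (i:ℕ) + 1 = j ∨ (j:ℕ) + 1 = i) (hi : 1 ≤ (i:ℕ)) (hj : 1 ≤ (j:ℕ)) :
      TLrel c k (.ι LA i * .ι LA j * .ι LA i) (.ι LA i)
  | hrel (i j : Fin k) (h : ((i:ℕ) = 0 ∧ (j:ℕ) = 1) ∨ ((i:ℕ) = 1 ∧ (j:ℕ) = 0)) (hc : c = 5) :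
      TLrel c k (.ι LA i * .ι LA j * .ι LA i * .ι LA j * .ι LA i)
        ((3 : LA) • (.ι LA i * .ι LA j * .ι LA i) - .ι LA i)
  | brel (i j : Fin k) (h : ((i:ℕ) = 0 ∧ (j:ℕ) = 1) ∨ ((i:ℕ) = 1 ∧ (j:ℕ) = 0)) (hc : c = 4) :
      TLrel c k (.ι LA i * .ι LA j * .ι LA i * .ι LA j) ((2 : LA) • (.ι LA i * .ι LA j))

/-- The generalized Temperley–Lieb algebra (type `H` for `c = 5`, type `B` for `c = 4`). -/
abbrev TL (c k : ℕ) : Type := RingQuot (TLrel c k)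

/-- The generator `b_{i+1}` of `TL c k`. -/
def bgen (c k : ℕ) (i : Fin k) : TL c k := RingQuot.mkAlgHom LA _ (FreeAlgebra.ι LA i)

/-- The monomial `b_{i_1} ⋯ b_{i_l}` attached to a word. -/
def bword (c k : ℕ) (ω : List (Fin k)) : TL c k := (ω.map (bgen c k)).prod

/-- The element `t̃ONE = (b_{i_1} - v⁻¹) ⋯ (b_{i_l} - v⁻¹)` attached to a word. -/
def tword (c k : ℕ) (ω : List (Fin k)) : TL c k :=
  (ω.map (fun i => bgen c k i - algebraMap LA (TL c k) vinv)).prod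

/-- The product of the Temperley–Lieb elements of a list of blocks (giving `f_w` when the
blocks form a decomposition of `w` as in Lemma 3.2.5). -/
def blocksElt (c k : ℕ) (bl : List (Blk (Fin k))) (h1 h2 : Fin k) : TL c k :=
  (bl.map (Blk.elt (bgen c k h1) (bgen c k h2) (bgen c k))).prod

/-- `r` assigns to every element satisfying `P` (e.g. every fully commutative element)
a reduced expression. -/
def IsRedChoice {W : Type*} [Group W] {M : CoxeterMatrix B} (cs : CoxeterSystem M W)
    (P : W → Prop) (r : W → List B) : Prop :=
  ∀ w : W, P w → cs.IsReduced (r w) ∧ cs.wordProd (r w) = w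

/-- The `ℤ[v⁻¹]`-lattice spanned by the elements `gen (r w)`, for `w` satisfying `P`;
realized as the `ℤ`-span of all the `v⁻ʲ`-multiples of these elements. -/
def Latt {W : Type*} (c k : ℕ) (P : W → Prop) (r : W → List (Fin k))
    (gen : List (Fin k) → TL c k) : Submodule ℤ (TL c k) :=
  Submodule.span ℤ {x : TL c k | ∃ (j : ℕ) (w : W), P w ∧ x = (T (-(j:ℤ)) : LA) • gen (r w)}

/-- `bar` is a bar involution: a ring homomorphism fixing each generator `b_i` and acting
on scalars by `v ↦ v⁻¹`. -/
def IsBar (c k : ℕ) (bar : TL c k →+* TL c k) : Prop :=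
  (∀ i : Fin k, bar (bgen c k i) = bgen c k i) ∧
  (∀ m : ℤ, bar (algebraMap LA (TL c k) (T m)) = algebraMap LA (TL c k) (T (-m)))

/-! The neighbours `q ⋯ a ⋯ q` of an internal occurrence `a` can be commuted next to it, so in
a reduced word for a fully commutative element they cannot form a braid `q a q`: the bond
`m(a, q)` is `5` and `{a, q} = {s₁, s₂}`. Adjacent letters of a reduced word differ, so three
consecutive internal occurrences read `a q a`; commuting the outer neighbour `q` of the first
and of the last one inwards yields a reduced word containing `q a q a q`, the longest element
of `⟨s₁, s₂⟩`, contradicting full commutativity. -/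

namespace List

variable {α : Type*}

theorem exists_eq_append_cons_of_getElem? {l : List α} {k : ℕ} {x : α} (h : l[k]? = some x) :
    ∃ A E, l = A ++ x :: E ∧ A.length = k := by
  obtain ⟨hk, rfl⟩ := getElem?_eq_some_iff.mp h
  exact ⟨l.take k, l.drop (k + 1), by simp, by simp; omega⟩

theorem exists_eq_append_cons_append_cons_append_cons {l : List α} {u p v : ℕ} {x y z : α}
    (hu : l[u]? = some x) (hp : l[p]? = some y) (hv : l[v]? = some z) (hup : u < p)
    (hpv : p < v) :
    ∃ A C D E, l = A ++ x :: C ++ y :: D ++ z :: E ∧ A.length = u ∧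
      (A ++ x :: C).length = p ∧ (A ++ x :: C ++ y :: D).length = v := by
  obtain ⟨L, E, rfl, hL⟩ := exists_eq_append_cons_of_getElem? hv
  rw [getElem?_append_left (by omega)] at hu hp
  obtain ⟨K, D, rfl, hK⟩ := exists_eq_append_cons_of_getElem? hp
  rw [getElem?_append_left (by omega)] at hu
  obtain ⟨A, C, rfl, hA⟩ := exists_eq_append_cons_of_getElem? hu
  exact ⟨A, C, D, E, by simp, hA, hK, by simpa using hL⟩

theorem exists_getElem?_of_mem_of_eq_append {l L C R : List α} {c : α} (hl : l = L ++ C ++ R)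
    (hc : c ∈ C) : ∃ i, L.length ≤ i ∧ i < L.length + C.length ∧ l[i]? = some c := by
  obtain ⟨C₁, C₂, rfl⟩ := append_of_mem hc
  refine ⟨L.length + C₁.length, by omega, by simp, ?_⟩
  subst hl
  simp

theorem eq_append_of_eq_append_cons {l L L' R R' : List α} {x y z : α} (h : l = L ++ x :: R)
    (hy : l[L.length + 1]? = some y) (h' : l = L' ++ z :: R') (hL' : L'.length = L.length + 2) :
    l = L ++ [x, y, z] ++ R' := by
  have hx : l[L.length]? = some x := by simp [h]
  have htake : l.take (L.length + 2) = L ++ [x, y] := by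
    rw [take_add_one, take_add_one, hx, hy, h, take_left]
    simp
  have hdrop : l.drop (L.length + 2) = z :: R' := by rw [h', drop_left' hL']
  rw [← take_append_drop (L.length + 2) l, htake, hdrop]
  simp

end List

theorem swapAt_involutive (k : ℕ) : Function.Involutive (swapAt k) := by
  intro p
  unfold _root_.swapAt
  split_ifs <;> omega

namespace CoxeterSystem

variable {W : Type*} [Group W] {M : CoxeterMatrix B} (cs : CoxeterSystem M W)

theorem simple_commute_of_eq_two {i j : B} (h : M i j = 2) :
    Commute (cs.simple i) (cs.simple j) := by
  have hij : cs.simple i * cs.simple j * (cs.simple i * cs.simple j) = 1 := by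
    rw [← pow_two, ← h]
    exact cs.simple_mul_simple_pow i j
  rwa [mul_eq_one_iff_eq_inv, mul_inv_rev, cs.inv_simple, cs.inv_simple] at hij

theorem commute_simple_wordProd {q : B} {ω : List B} (h : ∀ c ∈ ω, M q c = 2) :
    Commute (cs.simple q) (cs.wordProd ω) :=
  Commute.list_prod_right _ _ fun _ hx ↦ by
    obtain ⟨c, hc, rfl⟩ := List.mem_map.mp hx
    exact cs.simple_commute_of_eq_two (h c hc)

theorem wordProd_move_inward (A C X D E : List B) {q : B} (hC : ∀ c ∈ C, M q c = 2)
    (hD : ∀ d ∈ D, M q d = 2) :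
    cs.wordProd (A ++ q :: C ++ X ++ D ++ q :: E) =
      cs.wordProd (A ++ C ++ (q :: X ++ [q]) ++ D ++ E) := by
  simp only [wordProd_append, wordProd_cons, wordProd_nil, mul_one, mul_assoc]
  rw [← mul_assoc (cs.simple q) (cs.wordProd C), (cs.commute_simple_wordProd hC).eq,
    ← mul_assoc (cs.wordProd D) (cs.simple q), ← (cs.commute_simple_wordProd hD).eq]
  simp only [mul_assoc]

theorem IsReduced.of_wordProd_eq {ω ω' : List B} (hω : cs.IsReduced ω)
    (hπ : cs.wordProd ω' = cs.wordProd ω) (hl : ω'.length = ω.length) : cs.IsReduced ω' := by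
  rw [IsReduced, hπ, hl]
  exact hω

theorem IsReduced.getElem?_succ_ne {ω : List B} (hω : cs.IsReduced ω) {k : ℕ} {i j : B}
    (hi : ω[k]? = some i) (hj : ω[k + 1]? = some j) : i ≠ j := by
  rintro rfl
  have hpair : (ω.drop k).take 2 = [i, i] := by
    apply List.ext_getElem?
    rintro (_ | _ | n) <;> simp [hi, hj]
  have := (hω.drop k).take 2
  rw [hpair, IsReduced] at this
  simp [wordProd_cons] at this

theorem not_FC_of_isReduced_append {u v : List B} {i j : B} (h3 : 3 ≤ M i j)
    (hred : cs.IsReduced (u ++ alternatingWord i j (M i j) ++ v)) :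
    ¬ FC cs (cs.wordProd (u ++ alternatingWord i j (M i j) ++ v)) := by
  refine not_not_intro
    ⟨cs.wordProd u, cs.wordProd v, i, j, h3, by simp only [wordProd_append], ?_⟩
  have hu := cs.length_wordProd_le u
  have hb := cs.length_wordProd_le (alternatingWord i j (M i j))
  have hv := cs.length_wordProd_le v
  have hsub : cs.length (cs.wordProd (u ++ alternatingWord i j (M i j) ++ v)) ≤
      cs.length (cs.wordProd u) + cs.length (cs.wordProd (alternatingWord i j (M i j))) +
        cs.length (cs.wordProd v) := by
    rw [wordProd_append, wordProd_append]
    exact (cs.length_mul_le _ _).trans (Nat.add_le_add_right (cs.length_mul_le _ _) _)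
  rw [hred.eq, List.length_append, List.length_append] at hsub ⊢
  omega

theorem not_FC_of_move_inward {ω A C X D E : List B} {q i j : B} (hω : cs.IsReduced ω)
    (hdecomp : ω = A ++ q :: C ++ X ++ D ++ q :: E) (hC : ∀ c ∈ C, M q c = 2)
    (hD : ∀ d ∈ D, M q d = 2) (hX : q :: X ++ [q] = alternatingWord i j (M i j))
    (h3 : 3 ≤ M i j) : ¬ FC cs (cs.wordProd ω) := by
  subst hdecomp
  have hπ := cs.wordProd_move_inward A C X D E hC hD
  rw [hX, show A ++ C ++ alternatingWord i j (M i j) ++ D ++ E =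
    (A ++ C) ++ alternatingWord i j (M i j) ++ (D ++ E) by simp] at hπ
  rw [hπ]
  refine cs.not_FC_of_isReduced_append h3 (hω.of_wordProd_eq cs hπ.symm ?_)
  rw [← hX]
  simp
  omega

end CoxeterSystem

namespace SwapStep

variable {M : CoxeterMatrix B} {ω ω' : List B} {k : ℕ}

theorem exists_eq_append (h : SwapStep M ω ω' k) :
    ∃ A E a b, ω = A ++ a :: b :: E ∧ ω' = A ++ b :: a :: E ∧ A.length = k ∧
      M a b = 2 := by
  obtain ⟨a, b, ha, hb, hab, rfl⟩ := h
  obtain ⟨A, E, rfl, rfl⟩ := List.exists_eq_append_cons_of_getElem? ha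
  cases E with
  | nil => simp at hb
  | cons b' E =>
    obtain rfl : b' = b := by simpa using hb
    exact ⟨A, E, a, b', rfl, by simp, rfl, hab⟩

theorem getElem?_swapAt (h : SwapStep M ω ω' k) (y : ℕ) : ω'[swapAt k y]? = ω[y]? := by
  obtain ⟨A, E, a, b, rfl, rfl, rfl, -⟩ := h.exists_eq_append
  unfold _root_.swapAt
  split_ifs with h1 h2
  · simp [h1]
  · simp [h2]
  · simp only [List.getElem?_append, List.getElem?_cons]
    split_ifs <;> first | rfl | omega

end SwapStep

namespace CommPath

variable {M : CoxeterMatrix B} {ω ω' : List B} {f : ℕ → ℕ}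

theorem getElem?_apply (h : CommPath M ω ω' f) (y : ℕ) : ω'[f y]? = ω[y]? := by
  induction h with
  | refl => rfl
  | step _ hs ih => rw [Function.comp_apply, hs.getElem?_swapAt, ih]

theorem bijective (h : CommPath M ω ω' f) : f.Bijective := by
  induction h with
  | refl => exact Function.bijective_id
  | step _ _ ih => exact (swapAt_involutive _).bijective.comp ih

theorem apply_lt_apply (h : CommPath M ω ω' f) {x y : ℕ} {i j : B} (hx : ω[x]? = some i)
    (hy : ω[y]? = some j) (hij : M i j ≠ 2) (hxy : x < y) : f x < f y := by
  induction h with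
  | refl => exact hxy
  | @step ω₁ ω₂ f k hpath hs ih =>
    have hfx := (hpath.getElem?_apply x).trans hx
    have hfy := (hpath.getElem?_apply y).trans hy
    obtain ⟨a, b, ha, hb, hab, -⟩ := hs
    have : ¬ (f x = k ∧ f y = k + 1) := by
      rintro ⟨h1, h2⟩
      rw [h1, ha] at hfx
      rw [h2, hb] at hfy
      cases hfx; cases hfy
      exact hij hab
    show swapAt k (f x) < swapAt k (f y)
    unfold _root_.swapAt
    split_ifs <;> omega

end CommPath

namespace Internal

variable {M : CoxeterMatrix B} {ω : List B} {p : ℕ}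

theorem exists_positions (h : Internal M ω p) :
    ∃ u v a q, u < p ∧ p < v ∧ ω[u]? = some q ∧ ω[p]? = some a ∧ ω[v]? = some q ∧
      3 ≤ M a q ∧ ∀ x c, u < x → x < v → x ≠ p → ω[x]? = some c → M q c = 2 := by
  obtain ⟨ω₁, f, a, q, hpath, hp1, ha, hql, hqr, haq⟩ := h
  -- `f` keeps non-commuting letters in order, so a letter between the preimages of
  -- `f p ∓ 1` that does not commute with `q` would have to land on `f p` itself.
  obtain ⟨g, -, hfg⟩ := Function.bijective_iff_has_inverse.mp hpath.bijective
  have hp : ω[p]? = some a := (hpath.getElem?_apply p).symm.trans ha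
  have hu : ω[g (f p - 1)]? = some q := by rw [← hpath.getElem?_apply, hfg]; exact hql
  have hv : ω[g (f p + 1)]? = some q := by rw [← hpath.getElem?_apply, hfg]; exact hqr
  have hfu := hfg (f p - 1)
  have hfv := hfg (f p + 1)
  have haq₂ : M a q ≠ 2 := by omega
  have hqa₂ : M q a ≠ 2 := by rwa [M.symmetric]
  refine ⟨g (f p - 1), g (f p + 1), a, q, ?_, ?_, hu, hp, hv, haq, ?_⟩
  · by_contra! hle
    rcases hle.lt_or_eq with hlt | heq
    · have := hpath.apply_lt_apply hp hu haq₂ hlt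
      omega
    · rw [← heq] at hfu
      omega
  · by_contra! hle
    rcases hle.lt_or_eq with hlt | heq
    · have := hpath.apply_lt_apply hv hp hqa₂ hlt
      omega
    · rw [heq] at hfv
      omega
  · intro x c hux hxv hxp hx
    by_contra hqc
    have h1 := hpath.apply_lt_apply hu hx hqc hux
    have h2 := hpath.apply_lt_apply hx hv (by rwa [M.symmetric]) hxv
    exact hxp (hpath.bijective.injective (by omega))

theorem exists_eq_append (h : Internal M ω p) :
    ∃ A C D E a q, ω = A ++ q :: C ++ a :: D ++ q :: E ∧ (A ++ q :: C).length = p ∧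
      3 ≤ M a q ∧ (∀ c ∈ C, M q c = 2) ∧ ∀ d ∈ D, M q d = 2 := by
  obtain ⟨u, v, a, q, hup, hpv, hu, hp, hv, haq, hcomm⟩ := h.exists_positions
  obtain ⟨A, C, D, E, hω, hA, hC, hD⟩ :=
    List.exists_eq_append_cons_append_cons_append_cons hu hp hv hup hpv
  refine ⟨A, C, D, E, a, q, hω, hC, haq, fun c hc ↦ ?_, fun d hd ↦ ?_⟩
  · obtain ⟨x, hx₁, hx₂, hx⟩ := List.exists_getElem?_of_mem_of_eq_append
      (l := ω) (L := A ++ [q]) (R := a :: D ++ q :: E) (by rw [hω]; simp) hc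
    simp only [List.length_append, List.length_cons, List.length_nil] at hx₁ hx₂ hC hD
    exact hcomm x c (by omega) (by omega) (by omega) hx
  · obtain ⟨x, hx₁, hx₂, hx⟩ := List.exists_getElem?_of_mem_of_eq_append
      (l := ω) (L := A ++ q :: C ++ [a]) (R := q :: E) (by rw [hω]; simp) hd
    simp only [List.length_append, List.length_cons, List.length_nil] at hx₁ hx₂ hC hD
    exact hcomm x d (by omega) (by omega) (by omega) hx

end Internal

theorem Hmat_apply {k : ℕ} (i j : Fin k) : Hmat k i j = genM 5 i j := rfl

theorem genM_five_eq_three_or_of_three_le {i j : ℕ} (h : 3 ≤ genM 5 i j) :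
    genM 5 i j = 3 ∨ (i = 0 ∧ j = 1 ∨ i = 1 ∧ j = 0) := by
  unfold genM at *
  split_ifs at * <;> omega

theorem genM_five_eq_five {i j : ℕ} (h : i = 0 ∧ j = 1 ∨ i = 1 ∧ j = 0) :
    genM 5 i j = 5 := by
  unfold genM
  split_ifs <;> omega

theorem Internal.exists_eq_append_of_FC {k : ℕ} {W : Type*} [Group W]
    (cs : CoxeterSystem (Hmat k) W) {ω : List (Fin k)} {p : ℕ} (hω : cs.IsReduced ω)
    (hw : FC cs (cs.wordProd ω)) (h : Internal (Hmat k) ω p) :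
    ∃ (A C D E : List (Fin k)) (a q : Fin k),
      ω = A ++ q :: C ++ a :: D ++ q :: E ∧ (A ++ q :: C).length = p ∧
      ((a : ℕ) = 0 ∧ (q : ℕ) = 1 ∨ (a : ℕ) = 1 ∧ (q : ℕ) = 0) ∧
      (∀ c ∈ C, Hmat k q c = 2) ∧ ∀ d ∈ D, Hmat k q d = 2 := by
  obtain ⟨A, C, D, E, a, q, hdecomp, hp, haq, hC, hD⟩ := h.exists_eq_append
  rw [Hmat_apply] at haq
  refine ⟨A, C, D, E, a, q, hdecomp, hp,
    (genM_five_eq_three_or_of_three_le haq).resolve_left fun h3 ↦ ?_, hC, hD⟩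
  -- a bond `3` would turn `q a q` into a braid factor
  refine cs.not_FC_of_move_inward hω (A := A) (X := [a]) (E := E) (by simp [hdecomp]) hC hD ?_
    (by rw [Hmat_apply, h3]) hw
  rw [Hmat_apply, h3]
  rfl

theorem stmt_2_general (n : ℕ) (W : Type) [Group W]
    (cs : CoxeterSystem (Hmat (n-1)) W) (w : W) (hw : FC cs w)
    (ω : List (Fin (n-1))) (hred : cs.IsReduced ω) (hprod : cs.wordProd ω = w)
    (p : ℕ) :
    ¬ (Internal (Hmat (n-1)) ω p ∧ Internal (Hmat (n-1)) ω (p+1) ∧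
        Internal (Hmat (n-1)) ω (p+2)) := by
  subst hprod
  rintro ⟨h₀, h₁, h₂⟩
  obtain ⟨A, C, D₀, E₀, a, q, hω₀, hp₀, haq, hC, -⟩ := h₀.exists_eq_append_of_FC cs hred hw
  obtain ⟨_, _, _, _, b, _, hω₁, hp₁, hbq, -, -⟩ := h₁.exists_eq_append_of_FC cs hred hw
  obtain ⟨A₂, C₂, D, E, a', q', hω₂, hp₂, ha'q', -, hD⟩ := h₂.exists_eq_append_of_FC cs hred hw
  have ha : ω[p]? = some a := by rw [hω₀, ← hp₀]; simp
  have hb : ω[p + 1]? = some b := by rw [hω₁, ← hp₁]; simp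
  have ha' : ω[p + 2]? = some a' := by rw [hω₂, ← hp₂]; simp
  have hab := Fin.val_ne_of_ne (hred.getElem?_succ_ne cs ha hb)
  have hba' := Fin.val_ne_of_ne (hred.getElem?_succ_ne cs hb ha')
  obtain ⟨rfl, rfl, rfl⟩ : q = b ∧ a = a' ∧ q = q' := by
    simp only [Fin.ext_iff]
    omega
  have hω : ω = A ++ q :: C ++ [a, q, a] ++ (D ++ q :: E) :=
    List.eq_append_of_eq_append_cons (L := A ++ q :: C) (R := D₀ ++ q :: E₀)
      (L' := A₂ ++ q :: C₂) (by simp [hω₀]) (by rwa [hp₀]) (by simp [hω₂]) (by omega)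
  have hbond : Hmat (n - 1) a q = 5 := by rw [Hmat_apply, genM_five_eq_five haq]
  exact cs.not_FC_of_move_inward hred (A := A) (X := [a, q, a]) (E := E) (by simp [hω]) hC hD
    (by rw [hbond]; rfl) (by rw [hbond]; norm_num) hw

/-- Lemma 3.2.2(ii): no reduced expression for a fully commutative element
contains three consecutive internal occurrences of letters. -/
theorem stmt_2 (n : ℕ) (hn : 3 ≤ n) (W : Type) [Group W]
    (cs : CoxeterSystem (Hmat (n-1)) W) (w : W) (hw : FC cs w)
    (ω : List (Fin (n-1))) (hred : cs.IsReduced ω) (hprod : cs.wordProd ω = w)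
    (p : ℕ) :
    ¬ (Internal (Hmat (n-1)) ω p ∧ Internal (Hmat (n-1)) ω (p+1) ∧
        Internal (Hmat (n-1)) ω (p+2)) :=
  stmt_2_general n W cs w hw ω hred hprod p
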